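/- Under conditional independence of all labels given the input, any minimizer of expected Hamming loss is also a minimizer of expected 0/1 (subset) loss, and conversely, provided each marginal mode is unique. -/

import Mathlib

/-!
For a product distribution both expected losses depend only on the marginals: the Hamming loss
of `ŷ` is the average of the `1 - p j (ŷ j)`, and the 0/1 loss is `1 - ∏ j, p j (ŷ j)`. Both are
therefore minimized exactly at the vector of marginal modes, the sum because each summand is,
the product because its factors are nonnegative and the modes have positive mass.
-/

open Finset

theorem mul_ite_ne_eq_sub {α R : Type*} [Ring R] [DecidableEq α] (r : R) (a b : α) :
    r * (if a ≠ b then 1 else 0) = r - if a = b then r else 0 := by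
  split_ifs <;> simp_all

section Marginal

variable {ι α R : Type*} [Fintype ι] [DecidableEq ι] [Fintype α]

theorem sum_prod_mul_apply_eq [CommSemiring R] {p : ι → α → R} (hp : ∀ k, ∑ a, p k a = 1)
    (j : ι) (g : α → R) :
    ∑ y : ι → α, (∏ k, p k (y k)) * g (y j) = ∑ a, p j a * g a := by
  have hfactor : ∀ y : ι → α,
      (∏ k, p k (y k)) * g (y j) = ∏ k, p k (y k) * if k = j then g (y k) else 1 := by
    intro y
    rw [prod_mul_distrib, Fintype.prod_ite_eq']
  rw [sum_congr rfl fun y _ => hfactor y,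
    ← Fintype.prod_sum fun k a => p k a * if k = j then g a else 1,
    Fintype.prod_eq_single j fun k hk => by simp [hk, hp k]]
  simp

theorem sum_prod_eq_one [CommSemiring R] {p : ι → α → R} (hp : ∀ k, ∑ a, p k a = 1) :
    ∑ y : ι → α, ∏ k, p k (y k) = 1 := by
  rw [← Fintype.prod_sum]
  exact Fintype.prod_eq_one _ hp

variable [DecidableEq α]

theorem sum_prod_mul_ite_apply_ne [CommRing R] {p : ι → α → R} (hp : ∀ k, ∑ a, p k a = 1)
    (j : ι) (b : α) :
    ∑ y : ι → α, (∏ k, p k (y k)) * (if y j ≠ b then 1 else 0) = 1 - p j b := by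
  rw [sum_prod_mul_apply_eq hp j fun a => if a ≠ b then 1 else 0]
  simp_rw [mul_ite_ne_eq_sub, sum_sub_distrib, Fintype.sum_ite_eq', hp j]

theorem sum_prod_mul_ite_ne [CommRing R] {p : ι → α → R} (hp : ∀ k, ∑ a, p k a = 1)
    (x : ι → α) :
    ∑ y : ι → α, (∏ k, p k (y k)) * (if y ≠ x then 1 else 0) = 1 - ∏ k, p k (x k) := by
  simp_rw [mul_ite_ne_eq_sub, sum_sub_distrib, Fintype.sum_ite_eq', sum_prod_eq_one hp]

end Marginal

def IsStrictArgmax {α : Type*} (q : α → ℝ) (a : α) : Prop :=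
  ∀ b, b ≠ a → q b < q a

namespace IsStrictArgmax

variable {α : Type*} {q : α → ℝ} {a : α}

theorem le (h : IsStrictArgmax q a) (b : α) : q b ≤ q a := by
  rcases eq_or_ne b a with rfl | hb
  · rfl
  · exact (h b hb).le

theorem pos (h : IsStrictArgmax q a) (hq : ∀ b, 0 ≤ q b) {b : α} (hb : b ≠ a) : 0 < q a :=
  (hq b).trans_lt (h b hb)

end IsStrictArgmax

theorem Bool.isStrictArgmax_decide_lt {q : Bool → ℝ} (h : q false ≠ q true) :
    IsStrictArgmax q (decide (q false < q true)) := by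
  rcases h.lt_or_gt with hlt | hgt
  · simp [IsStrictArgmax, hlt]
  · simp [IsStrictArgmax, hgt.not_gt, hgt]

section Argmax

variable {ι α : Type*} [Fintype ι] {f : ι → α → ℝ} {m : ι → α}

theorem forall_sum_le_iff_eq_of_isStrictArgmax (hm : ∀ j, IsStrictArgmax (f j) (m j))
    (x : ι → α) : (∀ y : ι → α, ∑ j, f j (y j) ≤ ∑ j, f j (x j)) ↔ x = m := by
  refine ⟨fun h => ?_, fun hx y => hx ▸ sum_le_sum fun j _ => (hm j).le (y j)⟩
  by_contra hxm
  obtain ⟨j₀, hj₀⟩ := Function.ne_iff.mp hxm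
  have hlt : ∑ j, f j (x j) < ∑ j, f j (m j) :=
    sum_lt_sum (fun j _ => (hm j).le (x j)) ⟨j₀, mem_univ _, hm j₀ _ hj₀⟩
  exact (h m).not_gt hlt

theorem forall_prod_le_iff_eq_of_isStrictArgmax (hm : ∀ j, IsStrictArgmax (f j) (m j))
    (hf : ∀ j a, 0 ≤ f j a) (hpos : ∀ j, 0 < f j (m j)) (x : ι → α) :
    (∀ y : ι → α, ∏ j, f j (y j) ≤ ∏ j, f j (x j)) ↔ x = m := by
  refine ⟨fun h => ?_, fun hx y => hx ▸
    prod_le_prod (fun j _ => hf j (y j)) fun j _ => (hm j).le (y j)⟩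
  by_contra hxm
  obtain ⟨j₀, hj₀⟩ := Function.ne_iff.mp hxm
  have hlt : ∏ j, f j (x j) < ∏ j, f j (m j) := by
    classical
    rw [← mul_prod_erase univ _ (mem_univ j₀), ← mul_prod_erase univ _ (mem_univ j₀)]
    calc f j₀ (x j₀) * ∏ j ∈ univ.erase j₀, f j (x j)
        ≤ f j₀ (x j₀) * ∏ j ∈ univ.erase j₀, f j (m j) :=
          mul_le_mul_of_nonneg_left
            (prod_le_prod (fun j _ => hf j _) fun j _ => (hm j).le _) (hf _ _)
      _ < f j₀ (m j₀) * ∏ j ∈ univ.erase j₀, f j (m j) :=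
          mul_lt_mul_of_pos_right (hm j₀ _ hj₀) (prod_pos fun j _ => hpos j)
  exact (h m).not_gt hlt

end Argmax

/-- Under conditional independence (product distribution with unique
marginal modes), minimizers of expected Hamming loss and expected 0/1 loss coincide. -/
theorem hamming_and_zeroone_minimizers_coincide (L : ℕ) (hL : 0 < L)
    (p : Fin L → Bool → ℝ)
    (hnn : ∀ j b, 0 ≤ p j b)
    (hsum : ∀ j, p j false + p j true = 1)
    (hne : ∀ j, p j false ≠ p j true)
    (P : (Fin L → Bool) → ℝ)
    (hP : ∀ y, P y = ∏ j, p j (y j))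
    (hamLoss zoLoss : (Fin L → Bool) → ℝ)
    (hHam : ∀ yhat, hamLoss yhat =
      (1 / (L : ℝ)) * ∑ j, ∑ y : Fin L → Bool, P y * (if y j ≠ yhat j then 1 else 0))
    (hZO : ∀ yhat, zoLoss yhat = ∑ y : Fin L → Bool, P y * (if y ≠ yhat then 1 else 0)) :
    ∀ yhat : Fin L → Bool,
      ((∀ y, hamLoss yhat ≤ hamLoss y) ↔ (∀ y, zoLoss yhat ≤ zoLoss y)) := by
  intro yhat
  have hp : ∀ j, ∑ b, p j b = 1 := fun j => by rw [Fintype.sum_bool, add_comm, hsum]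
  obtain ⟨m, hm⟩ : ∃ m : Fin L → Bool, ∀ j, IsStrictArgmax (p j) (m j) :=
    ⟨_, fun j => Bool.isStrictArgmax_decide_lt (hne j)⟩
  have hham : ∀ y, hamLoss y = (1 / (L : ℝ)) * ∑ j, (1 - p j (y j)) := fun y => by
    simp only [hHam, hP, sum_prod_mul_ite_apply_ne hp]
  have hzo : ∀ y, zoLoss y = 1 - ∏ j, p j (y j) := fun y => by
    simp only [hZO, hP, sum_prod_mul_ite_ne hp]
  have hLinv : (0 : ℝ) < 1 / L := by positivity
  calc (∀ y, hamLoss yhat ≤ hamLoss y)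
        ↔ ∀ y : Fin L → Bool, ∑ j, p j (y j) ≤ ∑ j, p j (yhat j) := by
        simp only [hham, mul_le_mul_iff_right₀ hLinv, sum_sub_distrib, sub_le_sub_iff_left]
    _ ↔ yhat = m := forall_sum_le_iff_eq_of_isStrictArgmax hm yhat
    _ ↔ ∀ y : Fin L → Bool, ∏ j, p j (y j) ≤ ∏ j, p j (yhat j) :=
        (forall_prod_le_iff_eq_of_isStrictArgmax hm hnn
          (fun j => (hm j).pos (hnn j) (Bool.not_ne_self (m j))) yhat).symm
    _ ↔ ∀ y, zoLoss yhat ≤ zoLoss y := by simp only [hzo, sub_le_sub_iff_left]
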